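/- For a symmetric positive semidefinite bilinear form D and a symmetric positive semidefinite bilinear form B on a finite-dimensional real vector space V, if the kernel of D is contained in the kernel of B, then the supremum of B(v,v)/D(v,v) over all v not in the kernel of D is finite. -/

import Mathlib

/-- Cauchy–Schwarz for a symmetric positive semidefinite bilinear form. -/
lemma cs_aux {V : Type*} [AddCommGroup V] [Module ℝ V]
    (F : V →ₗ[ℝ] V →ₗ[ℝ] ℝ) (hs : ∀ u v, F u v = F v u) (hp : ∀ v, 0 ≤ F v v)
    (u v : V) : (F u v) ^ 2 ≤ F u u * F v v := by
  have h : ∀ t : ℝ, 0 ≤ F v v * (t * t) + (2 * F u v) * t + F u u := by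
    intro t
    have h0 := hp (u + t • v)
    simp only [map_add, map_smul, LinearMap.add_apply, LinearMap.smul_apply,
      smul_eq_mul] at h0
    have heq : F v v * (t * t) + (2 * F u v) * t + F u u
        = F u u + t * F v u + t * (F u v + t * F v v) := by
      rw [hs v u]; ring
    linarith [heq ▸ h0]
  have hd := discrim_le_zero h
  rw [discrim] at hd
  nlinarith

lemma zero_of_diag_zero {V : Type*} [AddCommGroup V] [Module ℝ V]
    (F : V →ₗ[ℝ] V →ₗ[ℝ] ℝ) (hs : ∀ u v, F u v = F v u) (hp : ∀ v, 0 ≤ F v v)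
    {u : V} (hu : F u u = 0) (v : V) : F u v = 0 := by
  have h := cs_aux F hs hp u v
  rw [hu, zero_mul] at h
  have := sq_nonneg (F u v)
  have : F u v ^ 2 = 0 := le_antisymm h this
  exact pow_eq_zero_iff (by norm_num) |>.mp this

/-- For symmetric positive semidefinite bilinear forms `D` and `B` on a
finite-dimensional real inner product space `V`, if the kernel of `D`
(vectors with `D v v = 0`) is contained in the kernel of `B`, then the
supremum of `B v v / D v v` over all `v` not in the kernel of `D` is finite. -/
theorem stmt0 {V : Type*} [NormedAddCommGroup V] [InnerProductSpace ℝ V]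
    [FiniteDimensional ℝ V]
    (D B : V →ₗ[ℝ] V →ₗ[ℝ] ℝ)
    (hDsymm : ∀ u v, D u v = D v u) (hBsymm : ∀ u v, B u v = B v u)
    (hDpos : ∀ v, 0 ≤ D v v) (hBpos : ∀ v, 0 ≤ B v v)
    (hker : ∀ v, D v v = 0 → B v v = 0) :
    BddAbove {r : ℝ | ∃ v : V, D v v ≠ 0 ∧ r = B v v / D v v} := by
  classical
  -- continuity of the quadratic forms
  have hcont : ∀ F : V →ₗ[ℝ] V →ₗ[ℝ] ℝ, Continuous fun v : V => F v v := by
    intro F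
    have hF' : Continuous fun v : V =>
        (LinearMap.toContinuousLinearMap (F v) : V →L[ℝ] ℝ) :=
      (((LinearMap.toContinuousLinearMap :
          (V →ₗ[ℝ] ℝ) ≃ₗ[ℝ] (V →L[ℝ] ℝ)).toLinearMap ∘ₗ F)).continuous_of_finiteDimensional
    have := isBoundedBilinearMap_apply (𝕜 := ℝ) (E := V) (F := ℝ)
      |>.continuous.comp (hF'.prodMk continuous_id)
    simpa [Function.comp_def] using this
  set K : Submodule ℝ V := LinearMap.ker D with hK
  have hmemK : ∀ v : V, v ∈ K ↔ D v v = 0 := by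
    intro v
    constructor
    · intro hv
      have : D v = 0 := hv
      simp [this]
    · intro hv
      have : D v = 0 := by
        ext w; exact zero_of_diag_zero D hDsymm hDpos hv w
      exact this
  set W : Submodule ℝ V := Kᗮ with hW
  -- if the set is empty we are done
  by_cases hne : ∃ v : V, D v v ≠ 0
  swap
  · push_neg at hne
    refine ⟨0, ?_⟩
    rintro r ⟨v, hv, rfl⟩
    exact absurd (hne v) hv
  obtain ⟨v₀, hv₀⟩ := hne
  -- decompose v₀ to show the unit sphere of W is nonempty
  have hWsphere : (Metric.sphere (0 : W) 1).Nonempty := by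
    obtain ⟨k, hk, w, hw, rfl⟩ := K.exists_add_mem_mem_orthogonal v₀
    have hwne : w ≠ 0 := by
      rintro rfl
      apply hv₀
      simpa using (hmemK _).1 hk
    have hnw : ‖w‖ ≠ 0 := norm_ne_zero_iff.mpr hwne
    refine ⟨(‖w‖⁻¹ : ℝ) • ⟨w, hw⟩, ?_⟩
    have hcoe : ‖(⟨w, hw⟩ : W)‖ = ‖w‖ := rfl
    simp only [mem_sphere_iff_norm, sub_zero, norm_smul, hcoe, norm_inv,
      norm_norm]
    exact inv_mul_cancel₀ hnw
  -- min of D and max of B on the unit sphere of W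
  have hcomp : IsCompact (Metric.sphere (0 : W) 1) := isCompact_sphere _ _
  have hDW : Continuous fun w : W => D (w : V) (w : V) :=
    (hcont D).comp continuous_subtype_val
  have hBW : Continuous fun w : W => B (w : V) (w : V) :=
    (hcont B).comp continuous_subtype_val
  obtain ⟨wc, hwc, hmin⟩ := hcomp.exists_isMinOn hWsphere hDW.continuousOn
  obtain ⟨wC, hwC, hmax⟩ := hcomp.exists_isMaxOn hWsphere hBW.continuousOn
  set c : ℝ := D (wc : V) (wc : V) with hc
  set C : ℝ := B (wC : V) (wC : V) with hCdef
  have hcpos : 0 < c := by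
    rcases lt_or_eq_of_le (hDpos (wc : V)) with h | h
    · exact h
    · exfalso
      have hmem : (wc : V) ∈ K := (hmemK _).2 h.symm
      have : (wc : V) = 0 := by
        have := wc.2  -- wc ∈ Kᗮ
        exact Submodule.orthogonal_disjoint K |>.le_bot ⟨hmem, wc.2⟩
      have : ‖(wc : V)‖ = 0 := by rw [this]; simp
      have h1 : ‖wc‖ = 1 := by simpa using hwc
      rw [show ‖wc‖ = ‖(wc : V)‖ from rfl, this] at h1
      norm_num at h1
  -- the claimed bound
  refine ⟨C / c, ?_⟩
  rintro r ⟨v, hv, rfl⟩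
  obtain ⟨k, hk, w, hw, rfl⟩ := K.exists_add_mem_mem_orthogonal v
  have hDk : ∀ x, D k x = 0 := by
    intro x
    have : D k = 0 := hk
    simp [this]
  have hBk : ∀ x, B k x = 0 := by
    intro x
    have hDkk : D k k = 0 := hDk k
    exact zero_of_diag_zero B hBsymm hBpos (hker k hDkk) x
  have hDeq : D (k + w) (k + w) = D w w := by
    simp [map_add, hDk, hDsymm w k]
  have hBeq : B (k + w) (k + w) = B w w := by
    simp [map_add, hBk, hBsymm w k]
  rw [hDeq] at hv ⊢
  rw [hBeq]
  -- normalize w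
  have hwne : w ≠ 0 := by rintro rfl; simp at hv
  have hnw : ‖w‖ ≠ 0 := norm_ne_zero_iff.mpr hwne
  set u : W := (‖w‖⁻¹ : ℝ) • ⟨w, hw⟩ with hu
  have husphere : u ∈ Metric.sphere (0 : W) 1 := by
    have hcoe : ‖(⟨w, hw⟩ : W)‖ = ‖w‖ := rfl
    simp only [mem_sphere_iff_norm, sub_zero, hu, norm_smul, hcoe, norm_inv,
      norm_norm]
    exact inv_mul_cancel₀ hnw
  have hucoe : (u : V) = (‖w‖⁻¹ : ℝ) • w := rfl
  have hDu : D (u : V) (u : V) = (‖w‖⁻¹)^2 * D w w := by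
    rw [hucoe]; simp [map_smul]; ring
  have hBu : B (u : V) (u : V) = (‖w‖⁻¹)^2 * B w w := by
    rw [hucoe]; simp [map_smul]; ring
  have hcle : c ≤ D (u : V) (u : V) := hmin husphere
  have hCge : B (u : V) (u : V) ≤ C := hmax husphere
  have hDwpos : 0 < D w w := lt_of_le_of_ne (hDpos w) (Ne.symm hv)
  have hinvpos : (0:ℝ) < (‖w‖⁻¹)^2 := by positivity
  have key : B w w / D w w = B (u:V) (u:V) / D (u:V) (u:V) := by
    rw [hDu, hBu, mul_div_mul_left _ _ (ne_of_gt hinvpos)]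
  rw [key]
  exact div_le_div₀ (le_trans (hBpos _) hCge) hCge hcpos hcle
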